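/- Let G be a finitely generated free group and x ∈ G with x ≠ 1. Then there exists a normal subgroup H of G of finite index such that x ∉ H. -/

import Mathlib

/-!
Write a nontrivial element as a reduced word `w` of length `n ≥ 1` and let the letter `w[i]`
move the point `i + 1` of `Fin (n + 1)` to `i`. For each generator `a` this prescribes a partial
map of `Fin (n + 1)`, injective because `w` is reduced, so it extends to a permutation `σ a`.
Then `lift σ x` walks `n` down to `0`, so `x` lies outside the kernel of `lift σ`, a normal
subgroup of finite index.
-/

open Equiv

namespace FreeGroup

variable {α : Type*}

theorem map_mk_apply_of_walk {X : Type*} (f : FreeGroup α →* Perm X) :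
    ∀ (w : List (α × Bool)) (p : Fin (w.length + 1) → X),
      (∀ i : Fin w.length, f (mk [w[i]]) (p i.succ) = p i.castSucc) →
        f (mk w) (p (Fin.last _)) = p 0
  | [], p, _ => by simp [← one_eq_mk]
  | c :: w, p, hp => by
    have hw := map_mk_apply_of_walk f w (p ∘ Fin.succ) fun i => hp i.succ
    have hmk : mk (c :: w) = mk [c] * mk w := by rw [mul_mk]; rfl
    rw [hmk, _root_.map_mul, Perm.mul_apply]
    simpa using hp 0 ▸ congrArg (f (mk [c])) hw

theorem IsReduced.snd_eq_of_succ_eq_castSucc {w : List (α × Bool)} (hw : IsReduced w)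
    {i j : Fin w.length} (hij : i.succ = j.castSucc) (h : w[i].1 = w[j].1) : w[i].2 = w[j].2 := by
  obtain ⟨j, hj⟩ := j
  obtain rfl : j = i + 1 := by simpa [Fin.ext_iff] using hij.symm
  exact hw.getElem i hj h

theorem IsReduced.injective_succ_or_castSucc {w : List (α × Bool)} (hw : IsReduced w) (a : α)
    (b : Bool) : Function.Injective fun i : {i : Fin w.length // w[i].1 = a} =>
      if w[i.1].2 = b then i.1.succ else i.1.castSucc := by
  rintro ⟨i, hi⟩ ⟨j, hj⟩ hij
  have hfst : w[i].1 = w[j].1 := hi.trans hj.symm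
  simp only at hij
  split_ifs at hij with hbi hbj hbj
  · simpa using hij
  · exact (hbj (hw.snd_eq_of_succ_eq_castSucc hij hfst ▸ hbi)).elim
  · exact (hbi (hw.snd_eq_of_succ_eq_castSucc hij.symm hfst.symm ▸ hbj)).elim
  · simpa using hij

theorem IsReduced.exists_lift_apply_succ_eq_castSucc {w : List (α × Bool)} (hw : IsReduced w) :
    ∃ σ : α → Perm (Fin (w.length + 1)),
      ∀ i : Fin w.length, lift σ (mk [w[i]]) i.succ = i.castSucc := by
  have hext : ∀ a, ∃ τ : Perm (Fin (w.length + 1)), ∀ i : {i : Fin w.length // w[i].1 = a},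
      τ (if w[i.1].2 = true then i.1.succ else i.1.castSucc) =
        if w[i.1].2 = false then i.1.succ else i.1.castSucc := fun a =>
    Perm.exists_extending_pair _ _ (hw.injective_succ_or_castSucc a true)
      (hw.injective_succ_or_castSucc a false)
  choose σ hσ using hext
  refine ⟨σ, fun i => ?_⟩
  have hi := hσ _ ⟨i, rfl⟩
  simp only [lift_mk, List.map_cons, List.map_nil, List.prod_singleton, Fin.getElem_fin] at hi ⊢
  cases hb : w[(i : ℕ)].2 <;> simp [hb, Equiv.symm_apply_eq] at hi ⊢ <;> simp [hi]

theorem exists_hom_perm_fin_apply_ne_one {x : FreeGroup α} (hx : x ≠ 1) :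
    ∃ (n : ℕ) (f : FreeGroup α →* Perm (Fin n)), f x ≠ 1 := by
  classical
  obtain ⟨σ, hσ⟩ := (isReduced_toWord (x := x)).exists_lift_apply_succ_eq_castSucc
  refine ⟨_, lift σ, fun h => hx ?_⟩
  have hwalk := map_mk_apply_of_walk (lift σ) x.toWord id hσ
  rw [mk_toWord, h] at hwalk
  simpa [Fin.ext_iff, ← toWord_eq_nil_iff] using hwalk

instance : Group.ResiduallyFinite (FreeGroup α) :=
  Group.residuallyFinite_of_forall_exists_finite_monoidHom fun _ hx =>
    let ⟨_, f, hf⟩ := exists_hom_perm_fin_apply_ne_one hx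
    ⟨_, _, inferInstance, f, hf⟩

end FreeGroup

theorem stmt_11_general {α : Type*} (x : FreeGroup α) (hx : x ≠ 1) :
    ∃ H : Subgroup (FreeGroup α), H.Normal ∧ H.FiniteIndex ∧ x ∉ H := by
  obtain ⟨H, hxH⟩ := Group.exists_finiteIndexNormalSubgroup_notMem x hx
  exact ⟨H.toSubgroup, H.isNormal', H.isFiniteIndex', hxH⟩

/-- Residual finiteness of finitely generated free groups: every nontrivial element lies
outside some finite-index normal subgroup. -/
theorem stmt_11 {α : Type*} [Finite α] (x : FreeGroup α) (hx : x ≠ 1) :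
    ∃ H : Subgroup (FreeGroup α), H.Normal ∧ H.FiniteIndex ∧ x ∉ H :=
  stmt_11_general x hx
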